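/- arXiv:math/0608719 — 3 statements merged into one kernel-verified Lean document; each statement's English description precedes it below -/
import Mathlib

section
/- Let (Ω, F, P) be a probability space and let X be a bounded real random variable on it. For each s ∈ [0,1] let P_s be the probability measure whose density with respect to P is e^{-sX} / E_P[e^{-sX}]. Then log E_P[ exp( -(X - E_P[X]) ) ] = ∫_0^1 (1-s) · Var_{P_s}(X) ds, where Var_{P_s}(X) = E_{P_s}[X²] - (E_{P_s}[X])². -/
/-!
`Λ(s) = log E_P[e^{-sX}]` is the cumulant generating function of `-X`, and `P_s` is the tilt of
`P` by `s • (-X)`, so `Λ''(s) = Var_{P_s}(X)`. Since `X` is bounded, `Λ` is smooth on all of `ℝ`,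
and Taylor's formula with integral remainder gives `Λ(1) = Λ(0) + Λ'(0) + ∫₀¹ (1 - s) Λ''(s) ds`
with `Λ(0) = 0` and `Λ'(0) = -E_P[X]`; the left-hand side of the theorem is `E_P[X] + Λ(1)`.
-/

open MeasureTheory

/-- The exponentially tilted measure `P_s` with density `e^{-sX}/E_P[e^{-sX}]`
with respect to `P`. -/
noncomputable def tiltedMeasure {Ω : Type*} [MeasurableSpace Ω] (P : Measure Ω)
    (X : Ω → ℝ) (s : ℝ) : Measure Ω :=
  P.withDensity fun ω =>
    ENNReal.ofReal (Real.exp (-(s * X ω)) / ∫ ω', Real.exp (-(s * X ω')) ∂P)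

open Set Real ProbabilityTheory

theorem ContDiff.sub_sub_mul_deriv_eq_integral {f : ℝ → ℝ} (hf : ContDiff ℝ 2 f) (x₀ x : ℝ) :
    f x - f x₀ - (x - x₀) * deriv f x₀ = ∫ t in x₀..x, (x - t) * iteratedDeriv 2 f t := by
  rcases eq_or_ne x₀ x with rfl | hne
  · simp
  have hwithin : ∀ {k : ℕ}, k ≤ 2 → ∀ t ∈ uIcc x₀ x,
      iteratedDerivWithin k f (uIcc x₀ x) t = iteratedDeriv k f t := fun hk t ht =>
    iteratedDerivWithin_eq_iteratedDeriv (uniqueDiffOn_uIcc hne)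
      (hf.contDiffAt.of_le (by exact_mod_cast hk)) ht
  have h := taylor_integral_remainder (n := 1) (x₀ := x₀) (x := x) hf.contDiffOn
  rw [intervalIntegral.integral_congr fun t ht => by rw [hwithin le_rfl t ht]] at h
  simpa [taylorWithinEval_succ, hwithin one_le_two x₀ left_mem_uIcc, sub_sub] using h

namespace ProbabilityTheory

variable {Ω : Type*} [MeasurableSpace Ω] {μ : Measure Ω} {X : Ω → ℝ}

lemma integrableExpSet_eq_univ_of_abs_le [IsFiniteMeasure μ] (hX : AEMeasurable X μ) {C : ℝ}
    (hC : ∀ᵐ ω ∂μ, |X ω| ≤ C) : integrableExpSet X μ = univ :=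
  eq_univ_of_forall fun _ => integrable_exp_mul_of_mem_Icc hX (hC.mono fun _ => abs_le.mp)

lemma contDiff_cgf (h : integrableExpSet X μ = univ) {n : WithTop ℕ∞} :
    ContDiff ℝ n (cgf X μ) := by
  have hanalytic := analyticOnNhd_cgf (X := X) (μ := μ)
  rw [h, interior_univ] at hanalytic
  exact hanalytic.contDiff

lemma log_integral_exp_neg_sub_const [NeZero μ] (h : 1 ∈ integrableExpSet (-X) μ) (c : ℝ) :
    log (∫ ω, exp (-(X ω - c)) ∂μ) = c + cgf (-X) μ 1 := by
  have hshift : ∫ ω, exp (-(X ω - c)) ∂μ = exp c * mgf (-X) μ 1 := by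
    rw [mgf, ← integral_const_mul]
    congr with ω
    rw [← exp_add]
    simp only [Pi.neg_apply, one_mul]
    ring_nf
  rw [hshift, log_mul (exp_ne_zero c) (mgf_pos' (NeZero.ne μ) h).ne', log_exp, cgf]

end ProbabilityTheory

section TiltedMeasure

variable {Ω : Type*} [MeasurableSpace Ω] {P : Measure Ω} {X : Ω → ℝ} {s : ℝ}

lemma tiltedMeasure_eq_tilted : tiltedMeasure P X s = P.tilted (s * (-X) ·) := by
  simp only [tiltedMeasure, Measure.tilted, Pi.neg_apply, mul_neg]

lemma variance_tiltedMeasure (hs : s ∈ interior (integrableExpSet (-X) P)) :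
    Var[X; tiltedMeasure P X s] = iteratedDeriv 2 (cgf (-X) P) s := by
  rw [tiltedMeasure_eq_tilted, ← variance_tilted_mul hs, variance_neg]

lemma variance_tiltedMeasure_eq_sub [IsProbabilityMeasure P]
    (hs : s ∈ interior (integrableExpSet (-X) P)) :
    Var[X; tiltedMeasure P X s] =
      ∫ ω, X ω ^ 2 ∂(tiltedMeasure P X s) - (∫ ω, X ω ∂(tiltedMeasure P X s)) ^ 2 := by
  have := isProbabilityMeasure_tilted (μ := P) (f := (s * (-X) ·))
    (interior_subset (s := integrableExpSet (-X) P) hs)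
  rw [tiltedMeasure_eq_tilted, variance_eq_sub]
  · rfl
  · simpa using (memLp_tilted_mul hs 2).neg

end TiltedMeasure

/-- For a bounded random variable `X` on a probability space `(Ω, F, P)`,
`log E_P[exp(-(X - E_P[X]))] = ∫₀¹ (1-s) Var_{P_s}(X) ds`, where `P_s` is the
exponentially tilted measure with density `e^{-sX}/E_P[e^{-sX}]` and
`Var_{P_s}(X) = E_{P_s}[X²] - (E_{P_s}[X])²`. -/
theorem log_laplace_eq_integral_tilted_variance
    {Ω : Type*} [MeasurableSpace Ω] (P : Measure Ω) [IsProbabilityMeasure P]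
    (X : Ω → ℝ) (hX : Measurable X) (hbdd : ∃ C : ℝ, ∀ ω, |X ω| ≤ C) :
    Real.log (∫ ω, Real.exp (-(X ω - ∫ ω', X ω' ∂P)) ∂P) =
      ∫ s in (0 : ℝ)..1, (1 - s) *
        ((∫ ω, (X ω) ^ 2 ∂(tiltedMeasure P X s)) -
          (∫ ω, X ω ∂(tiltedMeasure P X s)) ^ 2) := by
  obtain ⟨C, hC⟩ := hbdd
  have hexp : integrableExpSet (-X) P = univ :=
    integrableExpSet_eq_univ_of_abs_le hX.neg.aemeasurable (C := C)
      (ae_of_all _ fun ω => by simpa using hC ω)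
  have hmem : ∀ s, s ∈ interior (integrableExpSet (-X) P) := by simp [hexp]
  have htaylor := (contDiff_cgf hexp).sub_sub_mul_deriv_eq_integral 0 1
  rw [cgf_zero, deriv_cgf_zero (hmem 0), probReal_univ, div_one, integral_neg'] at htaylor
  simp_rw [← variance_tiltedMeasure_eq_sub (hmem _), variance_tiltedMeasure (hmem _)]
  rw [log_integral_exp_neg_sub_const (hexp ▸ mem_univ 1), ← htaylor]
  ring
end

section
/- Let n ≥ 1 and let ψ_0, …, ψ_{n-1} be real-valued functions in L²(ℝ) with ∫_ℝ ψ_l ψ_m dλ = δ_{lm}. Define p_n(λ_1, …, λ_n) = (det{ψ_{j-1}(λ_k)}_{j,k=1}^n)² / n! and K_n(λ, μ) = Σ_{l=0}^{n-1} ψ_l(λ) ψ_l(μ). Then p_n is a probability density on ℝⁿ, and for every bounded measurable φ : ℝ → ℝ, the variance of the linear statistic N_n[φ](λ_1, …, λ_n) = Σ_{l=1}^n φ(λ_l) with respect to p_n equals (1/2) ∫_ℝ ∫_ℝ (φ(λ_1) - φ(λ_2))² K_n(λ_1, λ_2)² dλ_1 dλ_2. -/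
/-!
Expanding `det² = ∑_{σ,τ} sgn σ sgn τ ∏_k ψ_{σ k}(λ_k) ψ_{τ k}(λ_k)` and integrating a product
weight `∏_k w_k(λ_k)` coordinatewise (Fubini) gives `∑_σ det (⟨w_k ψ_{σ j}, ψ_{σ k}⟩)_{j,k}`.
If all weights but one or two are `1`, orthonormality turns the other columns into columns of
the identity, so the one- and two-point moments `E φ(λ_l)` and `E φ(λ_l) φ(λ_m)` are read off
from `M = (∫ φ ψ_a ψ_b)_{a,b}` and `M₂ = (∫ φ² ψ_a ψ_b)_{a,b}`. This gives
`Var N_n[φ] = tr M₂ - ∑_{a,b} M_{ab}²`, and expanding `K_n²` shows that the double integral is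
`2 (tr M₂ - ∑_{a,b} M_{ab}²)` as well.
-/

open MeasureTheory

/-- The determinantal density `p_n(λ) = (det{ψ_{j-1}(λ_k)}_{j,k=1}^n)²/n!` built from the
functions `ψ_0, …, ψ_{n-1}`. -/
noncomputable def detDensity (n : ℕ) (ψ : Fin n → ℝ → ℝ) (lam : Fin n → ℝ) : ℝ :=
  (Matrix.of fun j k : Fin n => ψ j (lam k)).det ^ 2 / (n.factorial : ℝ)

open Matrix Equiv

namespace Matrix

variable {n R : Type*} [Fintype n] [DecidableEq n] [CommRing R]

theorem det_sq_eq_sum_prod_mul_det_submatrix (A : Matrix n n R) :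
    A.det ^ 2 = ∑ σ : Perm n, (∏ k, A (σ k) k) * (A.submatrix σ id).det := by
  rw [sq, det_apply, Finset.sum_mul]
  refine Finset.sum_congr rfl fun σ _ => ?_
  rw [det_permute, ← det_apply, Units.smul_def, zsmul_eq_mul]
  ring

theorem det_one_updateCol (i : n) (v : n → R) :
    ((1 : Matrix n n R).updateCol i v).det = v i := by
  simpa [one_apply] using det_updateCol_sum (1 : Matrix n n R) i v

theorem det_one_updateCol_updateCol {i j : n} (hij : i ≠ j) (u v : n → R) :
    (((1 : Matrix n n R).updateCol i u).updateCol j v).det = u i * v j - u j * v i := by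
  let A : Matrix n (Fin 2) R :=
    of fun k => ![u k - (Pi.single i 1 : n → R) k, v k - (Pi.single j 1 : n → R) k]
  let B : Matrix (Fin 2) n R := of ![(Pi.single i 1 : n → R), Pi.single j 1]
  have hAB : ((1 : Matrix n n R).updateCol i u).updateCol j v = 1 + A * B := by
    ext k c
    rcases eq_or_ne c j with rfl | hcj
    · simp [A, B, mul_apply, Fin.sum_univ_two, Pi.single_apply, one_apply, hij.symm]
    rcases eq_or_ne c i with rfl | hci
    · simp [A, B, mul_apply, Fin.sum_univ_two, Pi.single_apply, one_apply, hcj]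
    · simp [A, B, mul_apply, Fin.sum_univ_two, Pi.single_apply, one_apply, hcj, hci]
  have hBA : 1 + B * A = !![u i, v i; u j, v j] := by
    ext r s
    fin_cases r <;> fin_cases s <;> simp [A, B, Pi.single_apply, hij, hij.symm]
  -- Weinstein–Aronszajn: a rank-two perturbation of `1` has a `2 × 2` determinant.
  rw [hAB, det_one_add_mul_comm, hBA, det_fin_two_of]
  ring

end Matrix

section ProductWeights

variable {ι α R : Type*} [Fintype ι] [DecidableEq ι]

theorem prod_update_one_apply [CommMonoid R] (f : α → R) (l : ι) (x : ι → α) :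
    ∏ k, Function.update (1 : ι → α → R) l f k (x k) = f (x l) := by
  rw [Fintype.prod_eq_single l fun k hk => by simp [hk]]
  simp

theorem prod_update_update_one_apply [CommMonoid R] (f g : α → R) {l m : ι} (hlm : l ≠ m)
    (x : ι → α) :
    ∏ k, Function.update (Function.update (1 : ι → α → R) l f) m g k (x k) =
      f (x l) * g (x m) := by
  rw [Fintype.prod_eq_mul l m hlm fun k hk => by simp [hk.1, hk.2]]
  simp [hlm]

theorem prod_mul_det_sq_eq_sum [CommRing R] (ψ w : ι → α → R) (x : ι → α) :
    (∏ k, w k (x k)) * (of fun j k => ψ j (x k)).det ^ 2 =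
      ∑ σ : Perm ι, ∑ τ : Perm ι,
        (τ.sign : R) * ∏ k, w k (x k) * (ψ (σ (τ k)) (x k) * ψ (σ k) (x k)) := by
  rw [det_sq_eq_sum_prod_mul_det_submatrix, Finset.mul_sum]
  refine Finset.sum_congr rfl fun σ _ => ?_
  rw [det_apply, Finset.mul_sum, Finset.mul_sum]
  refine Finset.sum_congr rfl fun τ _ => ?_
  simp only [submatrix_apply, of_apply, id, Units.smul_def, zsmul_eq_mul, Finset.prod_mul_distrib]
  ring

theorem sum_sum_perm_apply [AddCommMonoid R] (F : ι → R) :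
    ∑ l, ∑ σ : Perm ι, F (σ l) = Fintype.card (Perm ι) • ∑ a, F a := by
  rw [Finset.sum_comm]
  simp [Equiv.sum_comp]

theorem sum_sum_sum_perm_apply_apply [AddCommMonoid R] (F : ι → ι → R) :
    ∑ l, ∑ m, ∑ σ : Perm ι, F (σ l) (σ m) = Fintype.card (Perm ι) • ∑ a, ∑ b, F a b := by
  have hσ (σ : Perm ι) : ∑ l, ∑ m, F (σ l) (σ m) = ∑ a, ∑ b, F a b :=
    Fintype.sum_equiv σ _ _ fun l => Fintype.sum_equiv σ _ _ fun _ => rfl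
  conv_lhs => enter [2, l]; rw [Finset.sum_comm]
  rw [Finset.sum_comm]
  simp [hσ]

end ProductWeights

section DeterminantalMoments

variable {ι α : Type*} [MeasurableSpace α] {μ : Measure α}

noncomputable def weightedGram (μ : Measure α) (ψ : ι → α → ℝ) (w : α → ℝ) (a b : ι) : ℝ :=
  ∫ t, w t * (ψ a t * ψ b t) ∂μ

def GramIntegrable (μ : Measure α) (ψ : ι → α → ℝ) (w : α → ℝ) : Prop :=
  ∀ a b, Integrable (fun t => w t * (ψ a t * ψ b t)) μ

variable {ψ : ι → α → ℝ}

theorem weightedGram_comm (w : α → ℝ) (a b : ι) :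
    weightedGram μ ψ w a b = weightedGram μ ψ w b a := by
  simp only [weightedGram, mul_comm (ψ a _)]

theorem weightedGram_one [DecidableEq ι]
    (horth : ∀ a b, ∫ t, ψ a t * ψ b t ∂μ = if a = b then 1 else 0) (a b : ι) :
    weightedGram μ ψ 1 a b = if a = b then 1 else 0 := by
  simp [weightedGram, horth]

theorem gramIntegrable_of_bounded (hψ : ∀ a, MemLp (ψ a) 2 μ) {w : α → ℝ}
    (hw : AEStronglyMeasurable w μ) {C : ℝ} (hC : ∀ t, |w t| ≤ C) : GramIntegrable μ ψ w :=
  fun a b => ((hψ a).integrable_mul (hψ b)).bdd_mul hw (ae_of_all _ hC)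

theorem gramIntegrable_update [DecidableEq ι] {w : ι → α → ℝ}
    (hw : ∀ k, GramIntegrable μ ψ (w k)) {f : α → ℝ} (hf : GramIntegrable μ ψ f) (l : ι) :
    ∀ k, GramIntegrable μ ψ (Function.update w l f k) :=
  (Function.forall_update_iff w fun _ g => GramIntegrable μ ψ g).2 ⟨hf, fun k _ => hw k⟩

theorem integral_integral_sum_mul {κ β : Type*} [Fintype κ] [MeasurableSpace β] {ν : Measure β}
    {F : κ → α → ℝ} {G : κ → β → ℝ} (hF : ∀ i, Integrable (F i) μ)
    (hG : ∀ i, Integrable (G i) ν) :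
    ∫ x, ∫ y, ∑ i, F i x * G i y ∂ν ∂μ = ∑ i, (∫ x, F i x ∂μ) * ∫ y, G i y ∂ν := by
  have hinner (x : α) : ∫ y, ∑ i, F i x * G i y ∂ν = ∑ i, F i x * ∫ y, G i y ∂ν := by
    rw [integral_finsetSum _ fun i _ => (hG i).const_mul _]
    simp_rw [integral_const_mul]
  simp_rw [hinner]
  rw [integral_finsetSum _ fun i _ => (hF i).mul_const _]
  simp_rw [integral_mul_const]

variable [Fintype ι] [DecidableEq ι]

theorem integral_integral_sub_sq_mul_kernel_sq (h1 : GramIntegrable μ ψ 1)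
    (horth : ∀ a b, ∫ t, ψ a t * ψ b t ∂μ = if a = b then 1 else 0) {f : α → ℝ}
    (hf : GramIntegrable μ ψ f) (hf2 : GramIntegrable μ ψ (f ^ 2)) :
    ∫ x, ∫ y, (f x - f y) ^ 2 * (∑ l, ψ l x * ψ l y) ^ 2 ∂μ ∂μ =
      2 * (∑ a, weightedGram μ ψ (f ^ 2) a a - ∑ a, ∑ b, weightedGram μ ψ f a b ^ 2) := by
  -- `(f x - f y)² = ∑ r, c r * u r x * v r y` separates the two variables.
  let c : Fin 3 → ℝ := ![1, -2, 1]
  let u : Fin 3 → α → ℝ := ![f ^ 2, f, 1]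
  let v : Fin 3 → α → ℝ := ![1, f, f ^ 2]
  have hu : ∀ r, GramIntegrable μ ψ (u r) := by
    intro r; fin_cases r
    exacts [hf2, hf, h1]
  have hv : ∀ r, GramIntegrable μ ψ (v r) := by
    intro r; fin_cases r
    exacts [h1, hf, hf2]
  have hsplit (x y : α) : (f x - f y) ^ 2 * (∑ l, ψ l x * ψ l y) ^ 2 =
      ∑ i : Fin 3 × ι × ι, c i.1 * (u i.1 x * (ψ i.2.1 x * ψ i.2.2 x)) *
        (v i.1 y * (ψ i.2.1 y * ψ i.2.2 y)) := by
    rw [sq (∑ l, ψ l x * ψ l y), Finset.sum_mul_sum, Finset.mul_sum, Fintype.sum_prod_type,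
      Fin.sum_univ_three, Fintype.sum_prod_type, Fintype.sum_prod_type, Fintype.sum_prod_type,
      ← Finset.sum_add_distrib, ← Finset.sum_add_distrib]
    refine Finset.sum_congr rfl fun a _ => ?_
    rw [Finset.mul_sum, ← Finset.sum_add_distrib, ← Finset.sum_add_distrib]
    refine Finset.sum_congr rfl fun b _ => ?_
    simp only [c, u, v, Matrix.cons_val, Pi.pow_apply, Pi.one_apply]
    ring
  simp_rw [hsplit]
  refine (integral_integral_sum_mul (κ := Fin 3 × ι × ι)
    (fun i => (hu i.1 i.2.1 i.2.2).const_mul (c i.1)) fun i => hv i.1 i.2.1 i.2.2).trans ?_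
  simp_rw [integral_const_mul]
  simp only [Fintype.sum_prod_type, Fin.sum_univ_three, c, u, v, Matrix.cons_val, weightedGram,
    Pi.one_apply, one_mul, horth, mul_ite, mul_one, mul_zero, Finset.sum_ite_eq,
    Finset.mem_univ, if_true, ite_mul, zero_mul, sq]
  simp only [mul_assoc, ← Finset.mul_sum]
  ring

variable [SigmaFinite μ]

theorem integrable_prod_mul_det_sq {w : ι → α → ℝ} (hw : ∀ k, GramIntegrable μ ψ (w k)) :
    Integrable (fun x => (∏ k, w k (x k)) * (of fun j k => ψ j (x k)).det ^ 2)
      (Measure.pi fun _ => μ) := by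
  simp_rw [prod_mul_det_sq_eq_sum]
  exact integrable_finsetSum _ fun σ _ => integrable_finsetSum _ fun τ _ =>
    (Integrable.fintype_prod fun k => hw k _ _).const_mul _

theorem integral_prod_mul_det_sq {w : ι → α → ℝ} (hw : ∀ k, GramIntegrable μ ψ (w k)) :
    ∫ x, (∏ k, w k (x k)) * (of fun j k => ψ j (x k)).det ^ 2 ∂Measure.pi (fun _ => μ) =
      ∑ σ : Perm ι, (of fun j k => weightedGram μ ψ (w k) (σ j) (σ k)).det := by
  have hterm (σ τ : Perm ι) : Integrable (fun x : ι → α =>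
      (τ.sign : ℝ) * ∏ k, w k (x k) * (ψ (σ (τ k)) (x k) * ψ (σ k) (x k)))
      (Measure.pi fun _ => μ) :=
    (Integrable.fintype_prod fun k => hw k _ _).const_mul _
  simp_rw [prod_mul_det_sq_eq_sum]
  rw [integral_finsetSum _ fun σ _ => integrable_finsetSum _ fun τ _ => hterm σ τ]
  refine Finset.sum_congr rfl fun σ _ => ?_
  rw [integral_finsetSum _ fun τ _ => hterm σ τ, det_apply]
  refine Finset.sum_congr rfl fun τ _ => ?_
  rw [integral_const_mul, integral_fintype_prod_eq_prod
    (fun k t => w k t * (ψ (σ (τ k)) t * ψ (σ k) t)), Units.smul_def, zsmul_eq_mul]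
  rfl

theorem integral_det_sq (h1 : GramIntegrable μ ψ 1)
    (horth : ∀ a b, ∫ t, ψ a t * ψ b t ∂μ = if a = b then 1 else 0) :
    ∫ x, (of fun j k => ψ j (x k)).det ^ 2 ∂Measure.pi (fun _ => μ) = Fintype.card (Perm ι) := by
  have h := integral_prod_mul_det_sq (w := 1) fun _ => h1
  have hσ (σ : Perm ι) : (of fun j k => if σ j = σ k then (1 : ℝ) else 0) = 1 := by
    ext j k
    simp [one_apply]
  simp only [Pi.one_apply, Finset.prod_const_one, one_mul, weightedGram_one horth, hσ] at h
  simp [h]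

theorem integrable_apply_mul_det_sq (h1 : GramIntegrable μ ψ 1) {f : α → ℝ}
    (hf : GramIntegrable μ ψ f) (l : ι) :
    Integrable (fun x => f (x l) * (of fun j k => ψ j (x k)).det ^ 2) (Measure.pi fun _ => μ) := by
  simpa only [prod_update_one_apply] using
    integrable_prod_mul_det_sq (gramIntegrable_update (w := 1) (fun _ => h1) hf l)

theorem integral_apply_mul_det_sq (h1 : GramIntegrable μ ψ 1)
    (horth : ∀ a b, ∫ t, ψ a t * ψ b t ∂μ = if a = b then 1 else 0) {f : α → ℝ}
    (hf : GramIntegrable μ ψ f) (l : ι) :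
    ∫ x, f (x l) * (of fun j k => ψ j (x k)).det ^ 2 ∂Measure.pi (fun _ => μ) =
      ∑ σ : Perm ι, weightedGram μ ψ f (σ l) (σ l) := by
  have h := integral_prod_mul_det_sq (gramIntegrable_update (w := 1) (fun _ => h1) hf l)
  simp only [prod_update_one_apply] at h
  rw [h]
  refine Finset.sum_congr rfl fun σ _ => ?_
  convert det_one_updateCol l fun j => weightedGram μ ψ f (σ j) (σ l) using 2
  ext j k
  rcases eq_or_ne k l with rfl | hk
  · simp
  · simp [hk, weightedGram_one horth, one_apply]

theorem integrable_apply_mul_apply_mul_det_sq (h1 : GramIntegrable μ ψ 1) {f g : α → ℝ}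
    (hf : GramIntegrable μ ψ f) (hg : GramIntegrable μ ψ g) {l m : ι} (hlm : l ≠ m) :
    Integrable (fun x => f (x l) * g (x m) * (of fun j k => ψ j (x k)).det ^ 2)
      (Measure.pi fun _ => μ) := by
  simpa only [prod_update_update_one_apply f g hlm] using integrable_prod_mul_det_sq
    (gramIntegrable_update (gramIntegrable_update (w := 1) (fun _ => h1) hf l) hg m)

theorem integral_apply_mul_apply_mul_det_sq (h1 : GramIntegrable μ ψ 1)
    (horth : ∀ a b, ∫ t, ψ a t * ψ b t ∂μ = if a = b then 1 else 0) {f g : α → ℝ}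
    (hf : GramIntegrable μ ψ f) (hg : GramIntegrable μ ψ g) {l m : ι} (hlm : l ≠ m) :
    ∫ x, f (x l) * g (x m) * (of fun j k => ψ j (x k)).det ^ 2 ∂Measure.pi (fun _ => μ) =
      ∑ σ : Perm ι, (weightedGram μ ψ f (σ l) (σ l) * weightedGram μ ψ g (σ m) (σ m) -
        weightedGram μ ψ f (σ m) (σ l) * weightedGram μ ψ g (σ l) (σ m)) := by
  have h := integral_prod_mul_det_sq
    (gramIntegrable_update (gramIntegrable_update (w := 1) (fun _ => h1) hf l) hg m)
  simp only [prod_update_update_one_apply f g hlm] at h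
  rw [h]
  refine Finset.sum_congr rfl fun σ _ => ?_
  convert det_one_updateCol_updateCol hlm (fun j => weightedGram μ ψ f (σ j) (σ l))
    (fun j => weightedGram μ ψ g (σ j) (σ m)) using 2
  ext j k
  rcases eq_or_ne k m with rfl | hkm
  · simp
  rcases eq_or_ne k l with rfl | hkl
  · simp [hkm]
  · simp [hkm, hkl, weightedGram_one horth, one_apply]

theorem integral_sum_apply_mul_det_sq (h1 : GramIntegrable μ ψ 1)
    (horth : ∀ a b, ∫ t, ψ a t * ψ b t ∂μ = if a = b then 1 else 0) {f : α → ℝ}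
    (hf : GramIntegrable μ ψ f) :
    ∫ x, (∑ l, f (x l)) * (of fun j k => ψ j (x k)).det ^ 2 ∂Measure.pi (fun _ => μ) =
      Fintype.card (Perm ι) * ∑ a, weightedGram μ ψ f a a := by
  simp_rw [Finset.sum_mul]
  rw [integral_finsetSum _ fun l _ => integrable_apply_mul_det_sq h1 hf l]
  simp_rw [integral_apply_mul_det_sq h1 horth hf]
  rw [sum_sum_perm_apply (fun a => weightedGram μ ψ f a a), nsmul_eq_mul]

theorem integral_sum_sq_mul_det_sq (h1 : GramIntegrable μ ψ 1)
    (horth : ∀ a b, ∫ t, ψ a t * ψ b t ∂μ = if a = b then 1 else 0) {f : α → ℝ}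
    (hf : GramIntegrable μ ψ f) (hf2 : GramIntegrable μ ψ (f ^ 2)) :
    ∫ x, (∑ l, f (x l)) ^ 2 * (of fun j k => ψ j (x k)).det ^ 2 ∂Measure.pi (fun _ => μ) =
      Fintype.card (Perm ι) * (∑ a, weightedGram μ ψ (f ^ 2) a a +
        (∑ a, weightedGram μ ψ f a a) ^ 2 - ∑ a, ∑ b, weightedGram μ ψ f a b ^ 2) := by
  set G := weightedGram μ ψ f
  -- The second summand vanishes on the diagonal, so `F` serves both `l = m` and `l ≠ m`.
  let F : ι → ι → ℝ := fun a b =>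
    (if a = b then weightedGram μ ψ (f ^ 2) a b else 0) + (G a a * G b b - G a b ^ 2)
  have hpair (l m : ι) :
      Integrable (fun x => f (x l) * f (x m) * (of fun j k => ψ j (x k)).det ^ 2)
        (Measure.pi fun _ => μ) ∧
      ∫ x, f (x l) * f (x m) * (of fun j k => ψ j (x k)).det ^ 2 ∂Measure.pi (fun _ => μ) =
        ∑ σ : Perm ι, F (σ l) (σ m) := by
    rcases eq_or_ne l m with rfl | hlm
    · simp only [← sq, ← Pi.pow_apply f 2]
      refine ⟨integrable_apply_mul_det_sq h1 hf2 l, ?_⟩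
      rw [integral_apply_mul_det_sq h1 horth hf2]
      simp [F, sq]
    · refine ⟨integrable_apply_mul_apply_mul_det_sq h1 hf hf hlm, ?_⟩
      rw [integral_apply_mul_apply_mul_det_sq h1 horth hf hf hlm]
      refine Finset.sum_congr rfl fun σ _ => ?_
      rw [weightedGram_comm f (σ m) (σ l)]
      simp [F, G, hlm, sq]
  have hexpand (x : ι → α) : (∑ l, f (x l)) ^ 2 * (of fun j k => ψ j (x k)).det ^ 2 =
      ∑ l, ∑ m, f (x l) * f (x m) * (of fun j k => ψ j (x k)).det ^ 2 := by
    simp_rw [sq (∑ l, f (x l)), Finset.sum_mul_sum, Finset.sum_mul]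
  simp_rw [hexpand]
  rw [integral_finsetSum _ fun l _ => integrable_finsetSum _ fun m _ => (hpair l m).1]
  simp_rw [integral_finsetSum _ fun m _ => (hpair _ m).1, fun l m => (hpair l m).2]
  rw [sum_sum_sum_perm_apply_apply, nsmul_eq_mul]
  simp only [F, Finset.sum_add_distrib, Finset.sum_sub_distrib, Finset.sum_ite_eq, Finset.mem_univ,
    if_true, sq, Finset.sum_mul_sum]
  ring

end DeterminantalMoments

theorem variance_linear_statistic_detDensity_general (n : ℕ) (ψ : Fin n → ℝ → ℝ)
    (hL2 : ∀ l, MemLp (ψ l) 2 (volume : Measure ℝ))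
    (horth : ∀ l m, (∫ t : ℝ, ψ l t * ψ m t) = if l = m then (1 : ℝ) else 0)
    (φ : ℝ → ℝ) (hφm : Measurable φ) (hφb : ∃ C : ℝ, ∀ t, |φ t| ≤ C) :
    (∀ lam : Fin n → ℝ, 0 ≤ detDensity n ψ lam) ∧
    (∫ lam : Fin n → ℝ, detDensity n ψ lam) = 1 ∧
    (∫ lam : Fin n → ℝ, (∑ l, φ (lam l)) ^ 2 * detDensity n ψ lam) -
        (∫ lam : Fin n → ℝ, (∑ l, φ (lam l)) * detDensity n ψ lam) ^ 2 =
      (1 / 2) * ∫ t₁ : ℝ, ∫ t₂ : ℝ,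
        (φ t₁ - φ t₂) ^ 2 * (∑ l, ψ l t₁ * ψ l t₂) ^ 2 := by
  obtain ⟨C, hC⟩ := hφb
  have h1 : GramIntegrable volume ψ 1 :=
    gramIntegrable_of_bounded hL2 aestronglyMeasurable_const fun _ => abs_one.le
  have hφ : GramIntegrable volume ψ φ :=
    gramIntegrable_of_bounded hL2 hφm.aestronglyMeasurable hC
  have hφ2 : GramIntegrable volume ψ (φ ^ 2) :=
    gramIntegrable_of_bounded hL2 (hφm.pow_const 2).aestronglyMeasurable fun t =>
      (abs_pow (φ t) 2).trans_le (pow_le_pow_left₀ (abs_nonneg _) (hC t) 2)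
  have hcard : (n.factorial : ℝ) = Fintype.card (Perm (Fin n)) := by simp [Fintype.card_perm]
  have hcard_pos : (0 : ℝ) < Fintype.card (Perm (Fin n)) := by positivity
  have hdens (F : (Fin n → ℝ) → ℝ) : ∫ lam, F lam * detDensity n ψ lam =
      (∫ lam, F lam * (of fun j k => ψ j (lam k)).det ^ 2 ∂Measure.pi fun _ => volume) /
        Fintype.card (Perm (Fin n)) := by
    simp only [detDensity, mul_div_assoc', integral_div, hcard]
    rfl
  refine ⟨fun lam => by unfold detDensity; positivity, ?_, ?_⟩
  · simpa [hcard_pos.ne', integral_det_sq h1 horth] using hdens 1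
  · rw [hdens, hdens, integral_sum_sq_mul_det_sq h1 horth hφ hφ2,
      integral_sum_apply_mul_det_sq h1 horth hφ,
      integral_integral_sub_sq_mul_kernel_sq h1 horth hφ hφ2]
    field_simp
    ring

/-- For orthonormal `ψ_0, …, ψ_{n-1}` in `L²(ℝ)`, the determinantal density
`p_n = (det{ψ_{j-1}(λ_k)})²/n!` is a probability density on `ℝⁿ`, and for every bounded
measurable `φ` the variance of the linear statistic `Σ_l φ(λ_l)` with respect to `p_n`
equals `(1/2) ∬ (φ(λ₁)-φ(λ₂))² K_n(λ₁,λ₂)² dλ₁ dλ₂`, where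
`K_n(λ,μ) = Σ_{l<n} ψ_l(λ) ψ_l(μ)`. -/
theorem variance_linear_statistic_detDensity (n : ℕ) (hn : 1 ≤ n)
    (ψ : Fin n → ℝ → ℝ) (hmeas : ∀ l, Measurable (ψ l))
    (hL2 : ∀ l, MemLp (ψ l) 2 (volume : Measure ℝ))
    (horth : ∀ l m, (∫ t : ℝ, ψ l t * ψ m t) = if l = m then (1 : ℝ) else 0)
    (φ : ℝ → ℝ) (hφm : Measurable φ) (hφb : ∃ C : ℝ, ∀ t, |φ t| ≤ C) :
    (∀ lam : Fin n → ℝ, 0 ≤ detDensity n ψ lam) ∧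
    (∫ lam : Fin n → ℝ, detDensity n ψ lam) = 1 ∧
    (∫ lam : Fin n → ℝ, (∑ l, φ (lam l)) ^ 2 * detDensity n ψ lam) -
        (∫ lam : Fin n → ℝ, (∑ l, φ (lam l)) * detDensity n ψ lam) ^ 2 =
      (1 / 2) * ∫ t₁ : ℝ, ∫ t₂ : ℝ,
        (φ t₁ - φ t₂) ^ 2 * (∑ l, ψ l t₁ * ψ l t₂) ^ 2 :=
  variance_linear_statistic_detDensity_general n ψ hL2 horth φ hφm hφb
end

section
/- Let v be a monic polynomial of degree q ≥ 1 with real coefficients and let g > 0 be such that all 2q zeros of v² - 4g are real and simple. Then the set σ = {λ ∈ ℝ : v(λ)² ≤ 4g} is a disjoint union of q closed intervals [a_1, b_1], …, [a_q, b_q] with a_1 < b_1 < a_2 < … < a_q < b_q; the function ρ(λ) = |v'(λ)| √(4g - v(λ)²) / (2πgq) for λ ∈ σ (and ρ = 0 off σ) is a probability density on ℝ; and each interval carries equal mass: ∫_{a_l}^{b_l} ρ(λ) dλ = 1/q for every l = 1, …, q. Consequently the charges β_l = ∫_{a_{l+1}}^{∞} ρ(λ) dλ satisfy β_l = (q - l)/q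 for l = 1, …, q-1. -/
/-!
Let `r₀ < ⋯ < r_{2q-1}` be the zeros of `v² - 4g`. Pairing them,
`v² - 4g = ∏ₗ (λ - r_{2l}) (λ - r_{2l+1})`, and since the intervals `[r_{2l}, r_{2l+1}]` on which
the factors are non-positive are disjoint, `σ` is their union. On each of the `q - 1` gaps
`(r_{2l+1}, r_{2l+2})` Rolle's theorem applied to `v²` gives a zero of `2 v v'` where `v ≠ 0`,
hence `q - 1` distinct zeros of `v'`; as `deg v' = q - 1` these are all of them, so `v` is
strictly monotone on every band and maps it onto `[-2√g, 2√g]`. The substitution `u = v(λ)` turns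
the mass of a band into the area `2πg` of a half disc of radius `2√g`, divided by `2πgq`.
-/

open MeasureTheory

/-- The density `ρ(λ) = |v'(λ)| √(4g - v(λ)²) / (2πgq)` on
`σ = {λ : v(λ)² ≤ 4g}`, extended by `0`. -/
noncomputable def bpDensity (q : ℕ) (v : Polynomial ℝ) (g : ℝ) (lam : ℝ) : ℝ :=
  if (v.eval lam) ^ 2 ≤ 4 * g then
    |(Polynomial.derivative v).eval lam| * Real.sqrt (4 * g - (v.eval lam) ^ 2) /
      (2 * Real.pi * g * q)
  else 0

open Polynomial Set Real
open scoped Function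

theorem Polynomial.exists_strictMono_eval_eq_prod {K : Type*} [Field K] [LinearOrder K]
    {p : K[X]} (hp : p.Monic) (hnodup : p.roots.Nodup) {n : ℕ}
    (hcard : Multiset.card p.roots = n) (hdeg : p.natDegree = n) :
    ∃ r : Fin n → K, StrictMono r ∧ ∀ x, p.eval x = ∏ i, (x - r i) := by
  set s : Finset K := ⟨p.roots, hnodup⟩
  have hs : s.card = n := hcard
  refine ⟨s.orderEmbOfFin hs, (s.orderEmbOfFin hs).strictMono, fun x => ?_⟩
  have hprod : ∏ i, (x - s.orderEmbOfFin hs i) = ∏ y ∈ s, (x - y) := by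
    conv_rhs => rw [← Finset.map_orderEmbOfFin_univ s hs, Finset.prod_map]
    rfl
  conv_lhs => rw [← prod_multiset_X_sub_C_of_monic_of_roots_card_eq hp (hcard.trans hdeg.symm)]
  rw [hprod, eval_multiset_prod, Multiset.map_map]
  simp [s, Finset.prod]

theorem Polynomial.exists_eq_of_isRoot_of_natDegree_le {R : Type*} [CommRing R] [IsDomain R]
    {P : R[X]} (hP : P ≠ 0) {n : ℕ} (hn : P.natDegree ≤ n) {z : Fin n → R}
    (hz : Function.Injective z) (hzP : ∀ i, P.IsRoot (z i)) {x : R} (hx : P.IsRoot x) :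
    ∃ i, z i = x := by
  classical
  have hsub : Finset.univ.image z ⊆ P.roots.toFinset := fun y hy => by
    obtain ⟨i, -, rfl⟩ := Finset.mem_image.1 hy
    exact Multiset.mem_toFinset.2 ((mem_roots hP).2 (hzP i))
  have hcard : P.roots.toFinset.card ≤ (Finset.univ.image z).card := by
    rw [Finset.card_image_of_injective _ hz, Finset.card_univ, Fintype.card_fin]
    exact (Multiset.toFinset_card_le _).trans ((card_roots' P).trans hn)
  have := Finset.eq_of_subset_of_card_le hsub hcard ▸
    Multiset.mem_toFinset.2 ((mem_roots hP).2 hx)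
  simpa using this

theorem Fin.prod_univ_two_mul {M : Type*} [CommMonoid M] {n : ℕ} (f : Fin (2 * n) → M) :
    ∏ i, f i = ∏ l : Fin n, f ⟨2 * l, by omega⟩ * f ⟨2 * l + 1, by omega⟩ := by
  rw [← (finProdFinEquiv.trans (finCongr (Nat.mul_comm n 2))).prod_comp, Fintype.prod_prod_type]
  refine Finset.prod_congr rfl fun l _ => ?_
  rw [Fin.prod_univ_two]
  congr 2 <;> ext <;> simp [finProdFinEquiv]; ring

theorem prod_sub_mul_sub_nonpos_iff {ι : Type*} [Fintype ι] {a b : ι → ℝ} (hab : ∀ i, a i ≤ b i)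
    (hdisj : Pairwise (Disjoint on fun i => Icc (a i) (b i))) (x : ℝ) :
    ∏ i, (x - a i) * (x - b i) ≤ 0 ↔ ∃ i, x ∈ Icc (a i) (b i) := by
  classical
  have hpos : ∀ i, x ∉ Icc (a i) (b i) → 0 < (x - a i) * (x - b i) := fun i hi =>
    lt_of_not_ge fun h => hi ((sub_mul_sub_nonpos_iff x (hab i)).1 h)
  constructor
  · intro h
    by_contra! hx
    exact h.not_gt (Finset.prod_pos fun i _ => hpos i (hx i))
  · rintro ⟨i, hi⟩
    rw [← Finset.mul_prod_erase _ _ (Finset.mem_univ i)]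
    refine mul_nonpos_of_nonpos_of_nonneg ((sub_mul_sub_nonpos_iff x (hab i)).2 hi) ?_
    refine Finset.prod_nonneg fun j hj => (hpos j fun hj' => ?_).le
    exact Set.disjoint_left.1 (hdisj (Finset.ne_of_mem_erase hj)) hj' hi

theorem integral_sqrt_sq_sub_sq {c : ℝ} (hc : 0 ≤ c) :
    ∫ u in -c..c, √(c ^ 2 - u ^ 2) = π * c ^ 2 / 2 := by
  rcases hc.eq_or_lt with rfl | hc
  · simp
  have hscale := intervalIntegral.integral_comp_mul_left (fun u => √(c ^ 2 - u ^ 2)) hc.ne'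
    (a := -1) (b := 1)
  have hunit : ∀ t : ℝ, √(c ^ 2 - (c * t) ^ 2) = c * √(1 - t ^ 2) := fun t => by
    rw [show c ^ 2 - (c * t) ^ 2 = c ^ 2 * (1 - t ^ 2) by ring, sqrt_mul (sq_nonneg c),
      sqrt_sq hc.le]
  simp only [hunit, intervalIntegral.integral_const_mul, integral_sqrt_one_sub_sq, mul_neg,
    mul_one, smul_eq_mul] at hscale
  field_simp at hscale ⊢
  linarith

theorem integral_abs_deriv_mul_comp {f f' φ : ℝ → ℝ} {a b : ℝ} (hab : a ≤ b)
    (hf : ∀ x ∈ Icc a b, HasDerivAt f (f' x) x) (hf'c : ContinuousOn f' (Icc a b))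
    (hf'0 : ∀ x ∈ Icc a b, f' x ≠ 0) (hφ : Continuous φ) (hφ0 : ∀ u, 0 ≤ φ u) :
    ∫ x in a..b, |f' x| * φ (f x) = |∫ u in f a..f b, φ u| := by
  rw [← uIcc_of_le hab] at hf hf'c
  rw [← intervalIntegral.integral_comp_mul_deriv hf hf'c hφ]
  have hnonneg : 0 ≤ ∫ x in a..b, |f' x| * φ (f x) :=
    intervalIntegral.integral_nonneg hab fun x _ => mul_nonneg (abs_nonneg _) (hφ0 _)
  rw [← abs_of_nonneg hnonneg]
  rcases hasDerivWithinAt_forall_lt_or_forall_gt_of_forall_ne (convex_Icc a b)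
    (fun x hx => (hf x (uIcc_of_le hab ▸ hx)).hasDerivWithinAt) hf'0 with hneg | hpos
  · rw [← abs_neg, ← intervalIntegral.integral_neg]
    refine congrArg _ (intervalIntegral.integral_congr fun x hx => ?_)
    rw [uIcc_of_le hab] at hx
    simp [abs_of_neg (hneg x hx), mul_comm]
  · refine congrArg _ (intervalIntegral.integral_congr fun x hx => ?_)
    rw [uIcc_of_le hab] at hx
    simp [abs_of_pos (hpos x hx), mul_comm]

theorem integral_abs_deriv_mul_sqrt_sub_sq {f f' : ℝ → ℝ} {a b s : ℝ} (hab : a < b)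
    (hf : ∀ x ∈ Icc a b, HasDerivAt f (f' x) x) (hf'c : ContinuousOn f' (Icc a b))
    (hf'0 : ∀ x ∈ Icc a b, f' x ≠ 0) (hs : 0 ≤ s) (ha : f a ^ 2 = s) (hb : f b ^ 2 = s) :
    ∫ x in a..b, |f' x| * √(s - f x ^ 2) = π * s / 2 := by
  rw [integral_abs_deriv_mul_comp hab.le hf hf'c hf'0 (φ := fun u => √(s - u ^ 2))
    (by fun_prop) fun _ => sqrt_nonneg _]
  have hne : f a ≠ f b := fun heq => by
    obtain ⟨x, hx, hx0⟩ := exists_hasDerivAt_eq_zero hab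
      (fun x hx => (hf x hx).continuousAt.continuousWithinAt) heq
      fun x hx => hf x (Ioo_subset_Icc_self hx)
    exact hf'0 x (Ioo_subset_Icc_self hx) hx0
  obtain ⟨c, hc, rfl⟩ : ∃ c, 0 ≤ c ∧ s = c ^ 2 := ⟨√s, sqrt_nonneg s, (sq_sqrt hs).symm⟩
  rw [sq_eq_sq_iff_eq_or_eq_neg] at ha hb
  rcases ha with ha | ha <;> rcases hb with hb | hb <;> rw [ha, hb] at hne ⊢
  · exact absurd rfl hne
  · rw [intervalIntegral.integral_symm, abs_neg, integral_sqrt_sq_sub_sq hc,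
      abs_of_nonneg (by positivity)]
  · rw [integral_sqrt_sq_sub_sq hc, abs_of_nonneg (by positivity)]
  · exact absurd rfl hne

theorem setIntegral_eq_card_mul_of_pairwise_disjoint {α ι : Type*} [MeasurableSpace α]
    {μ : Measure α} {f : α → ℝ} {I : ι → Set α} (hI : ∀ l, MeasurableSet (I l))
    (hdisj : Pairwise (Disjoint on I)) (hf : ∀ x, f x ≠ 0 → ∃ l, x ∈ I l)
    (hint : ∀ l, IntegrableOn f (I l) μ) {m : ℝ} (hmass : ∀ l, ∫ x in I l, f x ∂μ = m)
    (S : Set α) (hS : MeasurableSet S) (t : Finset ι) (hsub : ∀ l ∈ t, I l ⊆ S)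
    (hout : ∀ l ∉ t, Disjoint (I l) S) :
    ∫ x in S, f x ∂μ = t.card * m := by
  rw [setIntegral_eq_of_subset_of_forall_sdiff_eq_zero hS (iUnion₂_subset hsub),
    integral_biUnion_finset t (fun l _ => hI l) (hdisj.set_pairwise _) (fun l _ => hint l),
    Finset.sum_congr rfl fun l _ => hmass l, Finset.sum_const, nsmul_eq_mul]
  rintro x ⟨hxS, hxt⟩
  by_contra hfx
  obtain ⟨l, hl⟩ := hf x hfx
  by_cases hlt : l ∈ t
  · exact hxt (mem_biUnion hlt hl)
  · exact disjoint_left.1 (hout l hlt) hl hxS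

theorem exists_strictMono_sq_sub_eq_prod {q : ℕ} (hq : 1 ≤ q) {v : ℝ[X]} (hmonic : v.Monic)
    (hdeg : v.natDegree = q) {s : ℝ} (hsep : (v ^ 2 - C s).Separable)
    (hroots : Multiset.card (v ^ 2 - C s).roots = 2 * q) :
    ∃ r : Fin (2 * q) → ℝ, StrictMono r ∧ ∀ x, v.eval x ^ 2 - s = ∏ i, (x - r i) := by
  have hdeg₂ : (v ^ 2 - C s).natDegree = 2 * q := by
    rw [natDegree_sub_C, natDegree_pow, hdeg]
  have hmonic₂ : (v ^ 2 - C s).Monic := (hmonic.pow 2).sub_of_left <| degree_C_le.trans_lt <| by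
    rw [degree_eq_natDegree (hmonic.pow 2).ne_zero, natDegree_pow, hdeg]
    exact_mod_cast (by omega : 0 < 2 * q)
  obtain ⟨r, hr, hprod⟩ :=
    exists_strictMono_eval_eq_prod hmonic₂ (nodup_roots hsep) hroots hdeg₂
  exact ⟨r, hr, fun x => by simpa using hprod x⟩

section Bands

variable {q : ℕ} {r : Fin (2 * q) → ℝ}

def bandStart (r : Fin (2 * q) → ℝ) (l : Fin q) : ℝ := r ⟨2 * l, by omega⟩

def bandEnd (r : Fin (2 * q) → ℝ) (l : Fin q) : ℝ := r ⟨2 * l + 1, by omega⟩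

theorem bandStart_lt_bandEnd (hr : StrictMono r) (l : Fin q) : bandStart r l < bandEnd r l :=
  hr (Fin.mk_lt_mk.2 (by omega))

theorem bandEnd_lt_bandStart (hr : StrictMono r) {l m : Fin q} (h : l < m) :
    bandEnd r l < bandStart r m :=
  hr (Fin.mk_lt_mk.2 (by omega))

theorem bandStart_mono (hr : StrictMono r) : Monotone (bandStart r) :=
  fun _ _ h => hr.monotone (Fin.mk_le_mk.2 (by simp only [Fin.le_def] at h; omega))

theorem pairwise_disjoint_band (hr : StrictMono r) :
    Pairwise (Disjoint on fun l => Icc (bandStart r l) (bandEnd r l)) :=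
  (pairwise_disjoint_on _).2 fun _ _ h => disjoint_left.2 fun _ hl hm =>
    (hl.2.trans_lt ((bandEnd_lt_bandStart hr h).trans_le hm.1)).false

theorem prod_sub_nonpos_iff_exists_mem_band (hr : StrictMono r) (x : ℝ) :
    ∏ i, (x - r i) ≤ 0 ↔ ∃ l, x ∈ Icc (bandStart r l) (bandEnd r l) := by
  rw [Fin.prod_univ_two_mul]
  exact prod_sub_mul_sub_nonpos_iff (fun l => (bandStart_lt_bandEnd hr l).le)
    (pairwise_disjoint_band hr) x

theorem not_mem_band_of_mem_gap (hr : StrictMono r) {m : ℕ} (hm : 2 * m + 2 < 2 * q) {x : ℝ}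
    (hx : x ∈ Ioo (r ⟨2 * m + 1, by omega⟩) (r ⟨2 * m + 2, hm⟩)) (l : Fin q) :
    x ∉ Icc (bandStart r l) (bandEnd r l) := by
  rintro ⟨hl₁, hl₂⟩
  rcases le_or_gt (l : ℕ) m with h | h
  · exact (hl₂.trans (hr.monotone (Fin.mk_le_mk.2 (by omega)))).not_gt hx.1
  · exact ((hr.monotone (Fin.mk_le_mk.2 (by omega))).trans hl₁).not_gt hx.2

variable {v : ℝ[X]} {s : ℝ}

theorem sq_eval_le_iff_exists_mem_band
    (hprod : ∀ x, v.eval x ^ 2 - s = ∏ i, (x - r i)) (hr : StrictMono r) (x : ℝ) :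
    v.eval x ^ 2 ≤ s ↔ ∃ l, x ∈ Icc (bandStart r l) (bandEnd r l) := by
  rw [← sub_nonpos, hprod, prod_sub_nonpos_iff_exists_mem_band hr]

theorem sq_eval_edge (hprod : ∀ x, v.eval x ^ 2 - s = ∏ i, (x - r i))
    (i : Fin (2 * q)) : v.eval (r i) ^ 2 = s := by
  have h := hprod (r i)
  rw [Finset.prod_eq_zero (Finset.mem_univ i) (sub_self _)] at h
  linarith

theorem exists_isRoot_derivative_mem_gap
    (hprod : ∀ x, v.eval x ^ 2 - s = ∏ i, (x - r i))
    (hr : StrictMono r) (hs : 0 ≤ s) (m : Fin (q - 1)) :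
    ∃ ξ ∈ Ioo (r ⟨2 * m + 1, by omega⟩) (r ⟨2 * m + 2, by omega⟩), v.derivative.IsRoot ξ := by
  obtain ⟨ξ, hξ, hξ0⟩ := exists_hasDerivAt_eq_zero (f := fun x => (v ^ 2).eval x)
    (a := r ⟨2 * m + 1, by omega⟩) (b := r ⟨2 * m + 2, by omega⟩)
    (hr (Fin.mk_lt_mk.2 (by omega))) (v ^ 2).continuous.continuousOn
    (by simp only [eval_pow, sq_eval_edge hprod]) fun x _ => (v ^ 2).hasDerivAt x
  have hvξ : v.eval ξ ≠ 0 := fun h0 => by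
    obtain ⟨l, hl⟩ := (sq_eval_le_iff_exists_mem_band hprod hr ξ).1 (by rw [h0]; simpa using hs)
    exact not_mem_band_of_mem_gap hr (m := m) (by omega) hξ l hl
  refine ⟨ξ, hξ, ?_⟩
  simpa [derivative_sq, hvξ] using hξ0

theorem derivative_eval_ne_zero_of_mem_band
    (hprod : ∀ x, v.eval x ^ 2 - s = ∏ i, (x - r i))
    (hr : StrictMono r) (hs : 0 ≤ s) (hdeg : v.natDegree = q) {l : Fin q} {x : ℝ}
    (hx : x ∈ Icc (bandStart r l) (bandEnd r l)) : v.derivative.eval x ≠ 0 := by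
  intro hx0
  choose ξ hξ hξroot using exists_isRoot_derivative_mem_gap hprod hr hs
  have hv' : v.derivative ≠ 0 := fun h => by
    have := derivative_eq_zero.1 h
    have := l.pos
    omega
  have hξmono : StrictMono ξ := fun m m' h => by
    have hgap : r ⟨2 * m + 2, by omega⟩ ≤ r ⟨2 * m' + 1, by omega⟩ :=
      hr.monotone (Fin.mk_le_mk.2 (by simp only [Fin.lt_def] at h; omega))
    exact (hξ m).2.trans_le hgap |>.trans (hξ m').1
  obtain ⟨m, rfl⟩ := exists_eq_of_isRoot_of_natDegree_le hv'
    (hdeg ▸ natDegree_derivative_le v) hξmono.injective hξroot hx0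
  exact not_mem_band_of_mem_gap hr (m := m) (by omega) (hξ m) l hx

end Bands

section Density

variable {q : ℕ} {v : ℝ[X]} {g : ℝ}

theorem bpDensity_eq (x : ℝ) :
    bpDensity q v g x = |v.derivative.eval x| * √(4 * g - v.eval x ^ 2) / (2 * π * g * q) := by
  unfold bpDensity
  split_ifs with h
  · rfl
  · rw [sqrt_eq_zero'.2 (by linarith), mul_zero, zero_div]

theorem continuous_bpDensity : Continuous (bpDensity q v g) := by
  simp_rw [funext bpDensity_eq]
  fun_prop

theorem bpDensity_nonneg (x : ℝ) : 0 ≤ bpDensity q v g x := by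
  unfold bpDensity
  split_ifs with h
  · have : 0 ≤ g := by nlinarith
    positivity
  · rfl

theorem sq_eval_le_of_bpDensity_ne_zero {x : ℝ} (hx : bpDensity q v g x ≠ 0) :
    v.eval x ^ 2 ≤ 4 * g := by
  by_contra h
  exact hx (if_neg h)

theorem setIntegral_Icc_bpDensity (hg : 0 < g) {a b : ℝ} (hab : a < b)
    (hv' : ∀ x ∈ Icc a b, v.derivative.eval x ≠ 0) (ha : v.eval a ^ 2 = 4 * g)
    (hb : v.eval b ^ 2 = 4 * g) :
    ∫ x in Icc a b, bpDensity q v g x = 1 / q := by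
  rw [integral_Icc_eq_integral_Ioc, ← intervalIntegral.integral_of_le hab.le]
  simp_rw [bpDensity_eq, intervalIntegral.integral_div]
  rw [integral_abs_deriv_mul_sqrt_sub_sq hab (fun x _ => v.hasDerivAt x)
    v.derivative.continuous.continuousOn hv' (by positivity) ha hb]
  rcases Nat.eq_zero_or_pos q with rfl | hq
  · simp
  field_simp
  ring

end Density

/-- For a monic real polynomial `v` of degree `q` and `g > 0` such that all `2q` zeros of
`v² - 4g` are real and simple, the set `σ = {λ : v(λ)² ≤ 4g}` is a disjoint union of `q`
closed intervals `[a_1,b_1], …, [a_q,b_q]` with `a_1 < b_1 < a_2 < … < a_q < b_q`, the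
density `ρ = |v'| √(4g - v²)/(2πgq)` on `σ` is a probability density, each interval
carries mass `1/q`, and consequently the charges `β_l = ∫_{a_{l+1}}^∞ ρ` equal
`(q-l)/q`. -/
theorem bp_density_equal_masses (q : ℕ) (hq : 1 ≤ q)
    (v : Polynomial ℝ) (hmonic : v.Monic) (hdeg : v.natDegree = q)
    (g : ℝ) (hg : 0 < g)
    (hsep : (v ^ 2 - Polynomial.C (4 * g)).Separable)
    (hroots : (v ^ 2 - Polynomial.C (4 * g)).roots.card = 2 * q) :
    ∃ a b : Fin q → ℝ,
      (∀ l : Fin q, a l < b l) ∧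
      (∀ l : Fin q, ∀ h : (l : ℕ) + 1 < q, b l < a ⟨(l : ℕ) + 1, h⟩) ∧
      ({lam : ℝ | (v.eval lam) ^ 2 ≤ 4 * g} = ⋃ l : Fin q, Set.Icc (a l) (b l)) ∧
      (∀ lam : ℝ, 0 ≤ bpDensity q v g lam) ∧
      (∫ lam : ℝ, bpDensity q v g lam) = 1 ∧
      (∀ l : Fin q, (∫ lam in Set.Icc (a l) (b l), bpDensity q v g lam) = 1 / q) ∧
      (∀ k : Fin q, 1 ≤ (k : ℕ) →
        (∫ lam in Set.Ici (a k), bpDensity q v g lam) = ((q : ℝ) - (k : ℕ)) / q) := by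
  obtain ⟨r, hr, hprod⟩ := exists_strictMono_sq_sub_eq_prod hq hmonic hdeg hsep hroots
  have hσ := sq_eval_le_iff_exists_mem_band hprod hr
  have hmass : ∀ l, ∫ x in Icc (bandStart r l) (bandEnd r l), bpDensity q v g x = 1 / q :=
    fun l => setIntegral_Icc_bpDensity hg (bandStart_lt_bandEnd hr l)
      (fun _ hx => derivative_eval_ne_zero_of_mem_band hprod hr (by positivity) hdeg hx)
      (sq_eval_edge hprod _) (sq_eval_edge hprod _)
  have hunion := setIntegral_eq_card_mul_of_pairwise_disjoint (fun _ => measurableSet_Icc)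
    (pairwise_disjoint_band hr) (fun x hx => (hσ x).1 (sq_eval_le_of_bpDensity_ne_zero hx))
    (fun _ => continuous_bpDensity.integrableOn_Icc) hmass
  refine ⟨bandStart r, bandEnd r, bandStart_lt_bandEnd hr,
    fun l h => bandEnd_lt_bandStart hr (Fin.mk_lt_mk.2 (Nat.lt_add_one _)), ?_, bpDensity_nonneg,
    ?_, hmass, fun k _ => ?_⟩
  · exact Set.ext fun x => (hσ x).trans mem_iUnion.symm
  · rw [← setIntegral_univ, hunion univ MeasurableSet.univ Finset.univ (fun _ _ => subset_univ _)
      (by simp), Finset.card_fin, mul_one_div_cancel (Nat.cast_pos.2 hq).ne']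
  · rw [hunion _ measurableSet_Ici (Finset.Ici k) (fun l hl => ?_) (fun l hl => ?_), Fin.card_Ici]
    · rw [Nat.cast_sub k.is_lt.le]
      ring
    · exact fun x hx => (bandStart_mono hr (Finset.mem_Ici.1 hl)).trans hx.1
    · refine disjoint_left.2 fun x hx hxk => ?_
      have hlk : l < k := by simpa using hl
      exact (hx.2.trans_lt (bandEnd_lt_bandStart hr hlk)).not_ge hxk
end
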